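/- Every continuous piecewise affine function f: ℝ^m → ℝ^n can be obtained as a linear map of the unique solution of a multiparametric linear program: there exist a dimension n̂ ≤ 2n, a linear objective J(z,x) = c·z, a polyhedral set Ω ⊆ ℝ^{n̂} × ℝ^m (defined by finitely many affine inequalities in (z,x)), and a linear map T: ℝ^{n̂} → ℝ^n such that for every x ∈ ℝ^m the minimizer f̂(x) = argmin_{z : (z,x) ∈ Ω} c·z exists and is unique, and f(x) = T f̂(x). -/

import Mathlib

open Matrix

/-- A convex polyhedron in `ℝ^m`: a finite intersection of closed half-spaces. -/
def IsPolyhedron {m : ℕ} (P : Set (Fin m → ℝ)) : Prop :=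
  ∃ (k : ℕ) (a : Fin k → Fin m → ℝ) (c : Fin k → ℝ), P = {x | ∀ i, a i ⬝ᵥ x ≤ c i}

/-- A continuous piecewise affine function `ℝ^m → ℝ^n`: continuous, and there is a finite
collection of convex polyhedra covering `ℝ^m` on each of which `f` is affine. -/
def IsCPWAVec {m n : ℕ} (f : (Fin m → ℝ) → (Fin n → ℝ)) : Prop :=
  Continuous f ∧ ∃ (M : ℕ) (P : Fin M → Set (Fin m → ℝ)),
    (∀ i, IsPolyhedron (P i)) ∧ (⋃ i, P i) = Set.univ ∧
    ∀ i, ∃ (A : Matrix (Fin n) (Fin m) ℝ) (d : Fin n → ℝ),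
      ∀ x ∈ P i, f x = A.mulVec x + d

/-!
Each coordinate of a continuous piecewise affine function is a difference `G - H` of two
max-affine functions (finite maxima of affine functions). Stacking these `2n` functions gives
`f̂(x) = (G(x), H(x))`, the unique minimizer of `∑ z` over the polyhedron
`{z | z_w ≥ ℓ x for every affine piece ℓ of the w-th max-affine function}`, and
`f = [I, -I] f̂`.

The decomposition follows Ovchinnikov. For any two points `x`, `p` some affine piece `ℓ i` lies
below `f` at `x` and above `f` at `p`; this is proved by continuation along the segment from `x`
to `p`. Hence `f = max_p min {ℓ i | f p ≤ ℓ i p}`, a max-min of affine functions, and such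
expressions are differences of max-affine functions because
`max (a - b) (c - d) = max (a + d) (c + b) - (b + d)`.
-/

open Set
open scoped Pointwise

section MaxAffine

variable {E : Type*} [AddCommGroup E] [Module ℝ E]

def IsMaxAffine (g : E → ℝ) : Prop :=
  ∃ s : Set (E →ᵃ[ℝ] ℝ), s.Finite ∧ ∀ x, IsGreatest ((fun ℓ => ℓ x) '' s) (g x)

def IsDiffMaxAffine (f : E → ℝ) : Prop :=
  ∃ g h : E → ℝ, IsMaxAffine g ∧ IsMaxAffine h ∧ f = g - h

variable {f g h : E → ℝ}

namespace IsMaxAffine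

theorem affine (ℓ : E →ᵃ[ℝ] ℝ) : IsMaxAffine ℓ :=
  ⟨{ℓ}, finite_singleton ℓ, fun x => by simp⟩

theorem sup (hg : IsMaxAffine g) (hh : IsMaxAffine h) : IsMaxAffine (g ⊔ h) := by
  obtain ⟨s, hs, hsg⟩ := hg
  obtain ⟨t, ht, hth⟩ := hh
  exact ⟨s ∪ t, hs.union ht, fun x => by rw [image_union]; exact (hsg x).union (hth x)⟩

theorem add (hg : IsMaxAffine g) (hh : IsMaxAffine h) : IsMaxAffine (g + h) := by
  obtain ⟨s, hs, hsg⟩ := hg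
  obtain ⟨t, ht, hth⟩ := hh
  refine ⟨s + t, hs.add ht, fun x => ?_⟩
  have hx := image_add (AddMonoidHom.mk' (fun ℓ : E →ᵃ[ℝ] ℝ => ℓ x) fun _ _ => rfl) (s := s)
    (t := t)
  simp only [AddMonoidHom.mk'_apply] at hx
  rw [hx, ← image2_add]
  exact (hsg x).image2 (fun b => monotone_id.add_const b) (fun a => monotone_id.const_add a)
    (hth x)

end IsMaxAffine

namespace IsDiffMaxAffine

theorem affine (ℓ : E →ᵃ[ℝ] ℝ) : IsDiffMaxAffine ℓ :=
  ⟨ℓ, 0, .affine ℓ, by simpa using IsMaxAffine.affine (0 : E →ᵃ[ℝ] ℝ), (sub_zero _).symm⟩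

theorem neg (hf : IsDiffMaxAffine f) : IsDiffMaxAffine (-f) := by
  obtain ⟨g, h, hg, hh, rfl⟩ := hf
  exact ⟨h, g, hh, hg, neg_sub g h⟩

theorem sup (hf : IsDiffMaxAffine f) (hg : IsDiffMaxAffine g) : IsDiffMaxAffine (f ⊔ g) := by
  obtain ⟨f₁, f₂, hf₁, hf₂, rfl⟩ := hf
  obtain ⟨g₁, g₂, hg₁, hg₂, rfl⟩ := hg
  refine ⟨(f₁ + g₂) ⊔ (g₁ + f₂), f₂ + g₂, (hf₁.add hg₂).sup (hg₁.add hf₂), hf₂.add hg₂, ?_⟩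
  funext x
  simp only [Pi.sup_apply, Pi.sub_apply, Pi.add_apply, ← max_sub_sub_right]
  congr 1 <;> ring

theorem inf (hf : IsDiffMaxAffine f) (hg : IsDiffMaxAffine g) : IsDiffMaxAffine (f ⊓ g) := by
  simpa [neg_sup] using (hf.neg.sup hg.neg).neg

theorem of_isGreatest {Φ : Set (E → ℝ)} (hΦ : Φ.Finite) (hDC : ∀ φ ∈ Φ, IsDiffMaxAffine φ)
    (hf : ∀ x, IsGreatest ((fun φ => φ x) '' Φ) (f x)) : IsDiffMaxAffine f := by
  obtain ⟨⟨φ, hφ, -⟩, -⟩ := hf 0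
  have hne : hΦ.toFinset.Nonempty := ⟨φ, hΦ.mem_toFinset.2 hφ⟩
  have hsup : f = hΦ.toFinset.sup' hne id := by
    funext x
    rw [Finset.sup'_apply, Finset.sup'_eq_csSup_image, hΦ.coe_toFinset]
    exact (hf x).csSup_eq.symm
  rw [hsup]
  exact Finset.sup'_induction _ _ (fun _ h₁ _ h₂ => h₁.sup h₂) fun φ hφ =>
    hDC φ (hΦ.mem_toFinset.1 hφ)

end IsDiffMaxAffine

end MaxAffine

section PiecewiseAffine

variable {E F ι : Type*} [AddCommGroup E] [Module ℝ E] [TopologicalSpace E]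
  [AddCommGroup F] [Module ℝ F] [TopologicalSpace F]

structure IsCPWAWith (f : E → ℝ) (P : ι → Set E) (ℓ : ι → E →ᵃ[ℝ] ℝ) : Prop where
  continuous : Continuous f
  isClosed : ∀ i, IsClosed (P i)
  convex : ∀ i, Convex ℝ (P i)
  exists_mem : ∀ x, ∃ i, x ∈ P i
  eqOn : ∀ i, EqOn f (ℓ i) (P i)

variable {f : E → ℝ} {P : ι → Set E} {ℓ : ι → E →ᵃ[ℝ] ℝ}

theorem IsCPWAWith.comp (hf : IsCPWAWith f P ℓ) (φ : F →ᵃ[ℝ] E) (hφ : Continuous φ) :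
    IsCPWAWith (f ∘ φ) (fun i => φ ⁻¹' P i) (fun i => (ℓ i).comp φ) where
  continuous := hf.continuous.comp hφ
  isClosed i := (hf.isClosed i).preimage hφ
  convex i := (hf.convex i).affine_preimage φ
  exists_mem x := hf.exists_mem (φ x)
  eqOn i _ hx := hf.eqOn i hx

theorem AffineMap.antitone_of_apply_lt_apply (u : ℝ →ᵃ[ℝ] ℝ) {t s : ℝ} (hts : t < s)
    (h : u s < u t) : Antitone u := by
  have hu : ∀ x, u x = x * u.linear 1 + u 0 := fun x => by
    have hlin := u.linear.map_smul x 1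
    rw [smul_eq_mul, mul_one, smul_eq_mul] at hlin
    rw [congr_fun u.decomp x, Pi.add_apply, hlin]
  have hslope : u.linear 1 < 0 := by
    rw [hu s, hu t] at h
    nlinarith
  intro x y hxy
  rw [hu x, hu y]
  nlinarith

theorem exists_lt_Icc_subset_of_isClosed_of_convex [Finite ι] {I : ι → Set ℝ}
    (hcl : ∀ i, IsClosed (I i)) (hcv : ∀ i, Convex ℝ (I i)) (hcov : ∀ t, ∃ i, t ∈ I i) (t : ℝ) :
    ∃ i, ∃ s > t, Icc t s ⊆ I i := by
  -- the pieces missing `t` stay away from it, so a point just right of `t` lies in a piece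
  -- containing `t`
  set K := ⋃ i ∈ {i | t ∉ I i}, I i
  have hK : IsClosed K := (toFinite _).isClosed_biUnion fun i _ => hcl i
  have htK : t ∉ K := by simp [K]
  obtain ⟨s, hsK, hts⟩ := ((eventually_nhdsWithin_of_eventually_nhds
    (hK.isOpen_compl.eventually_mem htK)).and (self_mem_nhdsWithin (s := Ioi t))).exists
  obtain ⟨i, hi⟩ := hcov s
  have hti : t ∈ I i := by
    by_contra h
    exact hsK (mem_biUnion h hi)
  exact ⟨i, s, hts, (hcv i).ordConnected.out hti hi⟩

theorem IsCPWAWith.exists_apply_zero_le_and_le_apply_one [Finite ι] {g : ℝ → ℝ}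
    {I : ι → Set ℝ} {ℓ : ι → ℝ →ᵃ[ℝ] ℝ} (hg : IsCPWAWith g I ℓ) :
    ∃ i, ℓ i 0 ≤ g 0 ∧ g 1 ≤ ℓ i 1 := by
  let A := {t | ∃ i, ℓ i 0 ≤ g 0 ∧ g t ≤ ℓ i t}
  have hA : IsClosed A := by
    have hA_eq : A = ⋃ i ∈ {i | ℓ i 0 ≤ g 0}, {t | g t ≤ ℓ i t} := by ext; simp [A]
    rw [hA_eq]
    exact (toFinite _).isClosed_biUnion fun i _ =>
      isClosed_le hg.continuous (ℓ i).continuous_of_finiteDimensional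
  have h0 : (0 : ℝ) ∈ A :=
    let ⟨i, hi⟩ := hg.exists_mem 0
    ⟨i, (hg.eqOn i hi).ge, (hg.eqOn i hi).le⟩
  have hstep : ∀ t ∈ A ∩ Ico 0 1, (A ∩ Ioc t 1).Nonempty := by
    rintro t ⟨⟨i, hi0, hit⟩, ht0, ht1⟩
    obtain ⟨j, s, hts, hsub⟩ :=
      exists_lt_Icc_subset_of_isClosed_of_convex hg.isClosed hg.convex hg.exists_mem t
    set s' := min s 1
    have hts' : t < s' := lt_min hts ht1
    have hj : EqOn g (ℓ j) (Icc t s') :=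
      (hg.eqOn j).mono ((Icc_subset_Icc_right (min_le_left _ _)).trans hsub)
    refine ⟨s', ?_, hts', min_le_right _ _⟩
    by_cases his : g s' ≤ ℓ i s'
    · exact ⟨i, hi0, his⟩
    refine ⟨j, ?_, (hj ⟨hts'.le, le_rfl⟩).le⟩
    -- `ℓ i - ℓ j` decreases from `t` to `s'`, so `ℓ j 0 ≤ ℓ i 0 ≤ g 0`
    have hanti := (ℓ i - ℓ j).antitone_of_apply_lt_apply hts' (by
      simp only [AffineMap.coe_sub, Pi.sub_apply]
      rw [← hj ⟨le_rfl, hts'.le⟩, ← hj ⟨hts'.le, le_rfl⟩]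
      linarith [not_le.1 his])
    have h0t := hanti ht0
    simp only [AffineMap.coe_sub, Pi.sub_apply] at h0t
    rw [← hj ⟨le_rfl, hts'.le⟩] at h0t
    linarith
  exact (hA.inter isClosed_Icc).mem_of_ge_of_forall_exists_gt h0 zero_le_one hstep

variable [IsTopologicalAddGroup E] [ContinuousSMul ℝ E]

theorem IsCPWAWith.exists_le_and_le [Finite ι] (hf : IsCPWAWith f P ℓ) (x p : E) :
    ∃ i, ℓ i x ≤ f x ∧ f p ≤ ℓ i p := by
  have hline := hf.comp (AffineMap.lineMap x p) AffineMap.lineMap_continuous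
  simpa using hline.exists_apply_zero_le_and_le_apply_one

theorem IsCPWAWith.isDiffMaxAffine [Fintype ι] (hf : IsCPWAWith f P ℓ) : IsDiffMaxAffine f := by
  classical
  let S : E → {T : Finset ι // T.Nonempty} := fun p =>
    ⟨Finset.univ.filter fun i => f p ≤ ℓ i p,
      let ⟨i, hi⟩ := hf.exists_mem p; ⟨i, by simp [hf.eqOn i hi]⟩⟩
  let χ : {T : Finset ι // T.Nonempty} → E → ℝ := fun T => T.1.inf' T.2 fun i => ⇑(ℓ i)
  refine .of_isGreatest ((finite_range χ).subset (range_comp_subset_range S χ)) ?_ fun x =>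
    ⟨⟨χ (S x), mem_range_self x, ?_⟩, ?_⟩
  · rintro _ ⟨p, rfl⟩
    exact Finset.inf'_induction (S p).2 _ (fun _ h₁ _ h₂ => h₁.inf h₂) fun i _ => .affine (ℓ i)
  · obtain ⟨i, hi⟩ := hf.exists_mem x
    simp only [χ, Finset.inf'_apply]
    exact le_antisymm (Finset.inf'_le_of_le _ (by simp [S, hf.eqOn i hi]) (hf.eqOn i hi).ge)
      (Finset.le_inf' _ _ fun j hj => by simpa [S] using hj)
  · rintro _ ⟨_, ⟨p, rfl⟩, rfl⟩
    obtain ⟨i, hix, hip⟩ := hf.exists_le_and_le x p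
    simp only [Function.comp_apply, χ, Finset.inf'_apply]
    exact Finset.inf'_le_of_le _ (by simpa [S] using hip) hix

end PiecewiseAffine

theorem IsPolyhedron.isClosed {m : ℕ} {P : Set (Fin m → ℝ)} (hP : IsPolyhedron P) :
    IsClosed P := by
  obtain ⟨k, a, c, rfl⟩ := hP
  simp only [ofPred_forall]
  exact isClosed_iInter fun i =>
    isClosed_le (continuous_const.dotProduct continuous_id) continuous_const

theorem IsPolyhedron.convex {m : ℕ} {P : Set (Fin m → ℝ)} (hP : IsPolyhedron P) :
    Convex ℝ P := by
  obtain ⟨k, a, c, rfl⟩ := hP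
  simp only [ofPred_forall]
  exact convex_iInter fun i => convex_halfSpace_le (dotProductEquiv ℝ (Fin m) (a i)).isLinear (c i)

theorem IsCPWAVec.exists_isCPWAWith {m n : ℕ} {f : (Fin m → ℝ) → (Fin n → ℝ)}
    (hf : IsCPWAVec f) :
    ∃ (M : ℕ) (P : Fin M → Set (Fin m → ℝ)) (ℓ : Fin n → Fin M → (Fin m → ℝ) →ᵃ[ℝ] ℝ),
      ∀ j, IsCPWAWith (fun x => f x j) P (ℓ j) := by
  obtain ⟨hcont, M, P, hpoly, hcov, haff⟩ := hf
  choose A d hAd using haff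
  refine ⟨M, P, fun j i =>
    (dotProductEquiv ℝ (Fin m) (A i j)).toAffineMap + AffineMap.const ℝ _ (d i j), fun j =>
    ⟨(continuous_apply j).comp hcont, fun i => (hpoly i).isClosed, fun i => (hpoly i).convex,
      iUnion_eq_univ_iff.1 hcov, fun i x hx => ?_⟩⟩
  simp [hAd i x hx, Matrix.mulVec]

section LinearProgram

variable {α κ : Type*} [Fintype α] [Fintype κ]

theorem exists_constraints_iff_forall_le_of_isMaxAffine {g : κ → (α → ℝ) → ℝ}
    (hg : ∀ w, IsMaxAffine (g w)) :
    ∃ (k : ℕ) (P : Fin k → κ → ℝ) (Q : Fin k → α → ℝ) (r : Fin k → ℝ),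
      ∀ x z, (∀ i, P i ⬝ᵥ z + Q i ⬝ᵥ x ≤ r i) ↔ ∀ w, g w x ≤ z w := by
  classical
  choose s hs hsg using hg
  have : Finite (Σ w, s w) := by
    have := fun w => (hs w).to_subtype
    infer_instance
  let e := (Finite.equivFin (Σ w, s w)).symm
  refine ⟨_, fun i => -Pi.single (e i).1 1, fun i => (dotProductEquiv ℝ α).symm (e i).2.1.linear,
    fun i => -(e i).2.1 0, fun x z => ?_⟩
  have hrow : ∀ w (ℓ : (α → ℝ) →ᵃ[ℝ] ℝ),
      -Pi.single w 1 ⬝ᵥ z + (dotProductEquiv ℝ α).symm ℓ.linear ⬝ᵥ x ≤ -ℓ 0 ↔ ℓ x ≤ z w := by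
    intro w ℓ
    have hℓ : (dotProductEquiv ℝ α).symm ℓ.linear ⬝ᵥ x = ℓ.linear x :=
      LinearMap.congr_fun ((dotProductEquiv ℝ α).apply_symm_apply ℓ.linear) x
    rw [neg_dotProduct, single_dotProduct, one_mul, hℓ, congr_fun ℓ.decomp x, Pi.add_apply]
    constructor <;> intro h <;> linarith
  simp only [hrow]
  rw [e.forall_congr_right (q := fun σ => σ.2.1 x ≤ z σ.1)]
  simp only [Sigma.forall, Subtype.forall]
  exact forall_congr' fun w => by simp [isLUB_le_iff (hsg w x).isLUB, mem_upperBounds]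

theorem exists_mpLP_argmin_eq_of_isMaxAffine {g : κ → (α → ℝ) → ℝ}
    (hg : ∀ w, IsMaxAffine (g w)) :
    ∃ (c : κ → ℝ) (k : ℕ) (P : Fin k → κ → ℝ) (Q : Fin k → α → ℝ) (r : Fin k → ℝ),
      ∀ x : α → ℝ,
        (∀ i, P i ⬝ᵥ (g · x) + Q i ⬝ᵥ x ≤ r i) ∧
        (∀ z : κ → ℝ, (∀ i, P i ⬝ᵥ z + Q i ⬝ᵥ x ≤ r i) → c ⬝ᵥ (g · x) ≤ c ⬝ᵥ z) ∧
        (∀ z : κ → ℝ, (∀ i, P i ⬝ᵥ z + Q i ⬝ᵥ x ≤ r i) →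
          c ⬝ᵥ z = c ⬝ᵥ (g · x) → z = (g · x)) := by
  obtain ⟨k, P, Q, r, hΩ⟩ := exists_constraints_iff_forall_le_of_isMaxAffine hg
  refine ⟨1, k, P, Q, r, fun x =>
    ⟨(hΩ x _).2 fun _ => le_rfl, fun z hz => ?_, fun z hz hcz => ?_⟩⟩
  · simp only [one_dotProduct]
    exact Finset.sum_le_sum fun w _ => (hΩ x z).1 hz w
  · simp only [one_dotProduct] at hcz
    funext w
    exact ((Finset.sum_eq_sum_iff_of_le fun w _ => (hΩ x z).1 hz w).1 hcz.symm w
      (Finset.mem_univ w)).symm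

end LinearProgram

/-- Every continuous piecewise affine `f : ℝ^m → ℝ^n` is a linear map of the
unique solution of a multiparametric linear program: there are a dimension `n̂ ≤ 2n`, a linear
objective `z ↦ c ⬝ z`, a polyhedral set `Ω ⊆ ℝ^{n̂} × ℝ^m` given by finitely many affine
inequalities `P_i ⬝ z + Q_i ⬝ x ≤ r_i` in `(z,x)`, and a linear map `T` such that for every
parameter `x` the minimizer `f̂(x) = argmin_{z : (z,x) ∈ Ω} c ⬝ z` exists and is unique, and
`f(x) = T f̂(x)`. -/
theorem cpwa_is_linear_map_of_mpLP_solution (m n : ℕ)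
    (f : (Fin m → ℝ) → (Fin n → ℝ)) (hf : IsCPWAVec f) :
    ∃ (nh : ℕ), nh ≤ 2 * n ∧
      ∃ (c : Fin nh → ℝ) (k : ℕ) (P : Fin k → Fin nh → ℝ) (Q : Fin k → Fin m → ℝ)
        (r : Fin k → ℝ) (T : Matrix (Fin n) (Fin nh) ℝ)
        (fhat : (Fin m → ℝ) → (Fin nh → ℝ)),
        ∀ x : Fin m → ℝ,
          (∀ i, P i ⬝ᵥ fhat x + Q i ⬝ᵥ x ≤ r i) ∧
          (∀ z : Fin nh → ℝ, (∀ i, P i ⬝ᵥ z + Q i ⬝ᵥ x ≤ r i) → c ⬝ᵥ fhat x ≤ c ⬝ᵥ z) ∧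
          (∀ z : Fin nh → ℝ, (∀ i, P i ⬝ᵥ z + Q i ⬝ᵥ x ≤ r i) →
            c ⬝ᵥ z = c ⬝ᵥ fhat x → z = fhat x) ∧
          f x = T.mulVec (fhat x) := by
  obtain ⟨M, P, ℓ, hfP⟩ := hf.exists_isCPWAWith
  choose G H hG hH hGH using fun j => (hfP j).isDiffMaxAffine
  obtain ⟨c, k, A, B, r, hLP⟩ := exists_mpLP_argmin_eq_of_isMaxAffine (g := Fin.append G H)
    (Fin.addCases (fun j => by rw [Fin.append_left]; exact hG j)
      (fun j => by rw [Fin.append_right]; exact hH j))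
  refine ⟨n + n, (two_mul n).ge, c, k, A, B, r,
    Matrix.of fun j => Fin.append (Pi.single j 1) (-Pi.single j 1), _, fun x =>
    ⟨(hLP x).1, (hLP x).2.1, (hLP x).2.2, ?_⟩⟩
  ext j
  simp only [Matrix.mulVec, dotProduct, Fin.sum_univ_add, Fin.append_left, Fin.append_right,
    Matrix.of_apply]
  simp [Pi.single_apply, congr_fun (hGH j) x, sub_eq_add_neg]
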